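/- Let (V, g, J) be a real inner product space with orthogonal complex structure. Let Ω^{1,1}_a denote the orthogonal complement, inside the space of V-valued 2-forms B with B(J·,J·) = B, of the kernel of the Bianchi operator b. Then b restricted to Ω^{1,1}_a is an isomorphism onto the space Ω⁺ of 3-forms of type '+', with inverse ω ↦ (3/4)(ω + Mω). -/

import Mathlib

open scoped BigOperators

/-- Bianchi symmetrization of a `V`-valued 2-form, as a 3-form. -/
noncomputable def bianchiV {V : Type*} [NormedAddCommGroup V] [InnerProductSpace ℝ V]
    (B : V →ₗ[ℝ] V →ₗ[ℝ] V) (x y z : V) : ℝ :=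
  (1/3 : ℝ) * ((inner ℝ x (B y z) : ℝ) + (inner ℝ y (B z x) : ℝ) + (inner ℝ z (B x y) : ℝ))

/-- The inner product on `V`-valued 2-forms induced by the inner product of `V`
(computed in an orthonormal basis). -/
noncomputable def formInner {V : Type*} [NormedAddCommGroup V] [InnerProductSpace ℝ V]
    [FiniteDimensional ℝ V] (A B : V →ₗ[ℝ] V →ₗ[ℝ] V) : ℝ :=
  ∑ i, ∑ j, (inner ℝ (A (stdOrthonormalBasis ℝ V i) (stdOrthonormalBasis ℝ V j))
      (B (stdOrthonormalBasis ℝ V i) (stdOrthonormalBasis ℝ V j)) : ℝ)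

/-- `Ω^{1,1}`: alternating `V`-valued 2-forms invariant under `M : B ↦ B(J·,J·)`. -/
def isOm11 {V : Type*} [NormedAddCommGroup V] [InnerProductSpace ℝ V]
    (J : V →ₗ[ℝ] V) (A : V →ₗ[ℝ] V →ₗ[ℝ] V) : Prop :=
  (∀ y, A y y = 0) ∧ (∀ y z, A (J y) (J z) = A y z)

/-- `Ω^{1,1}_a`: the orthogonal complement, inside `Ω^{1,1}`, of the kernel of the
Bianchi operator. -/
noncomputable def isOm11a {V : Type*} [NormedAddCommGroup V] [InnerProductSpace ℝ V]
    [FiniteDimensional ℝ V] (J : V →ₗ[ℝ] V) (A : V →ₗ[ℝ] V →ₗ[ℝ] V) : Prop :=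
  isOm11 J A ∧ ∀ S : V →ₗ[ℝ] V →ₗ[ℝ] V,
    isOm11 J S → (∀ x y z, bianchiV S x y z = 0) → formInner A S = 0

namespace Stmt5Aux
set_option linter.unusedSectionVars false

lemma sum_rot {ι : Type*} [Fintype ι] (f : ι → ι → ι → ℝ) :
    ∑ a, ∑ b, ∑ c, f a b c = ∑ a, ∑ b, ∑ c, f c a b := by
  rw [Finset.sum_comm]
  exact Finset.sum_congr rfl fun b _ => Finset.sum_comm

lemma sum_rot' {ι : Type*} [Fintype ι] (f : ι → ι → ι → ℝ) :
    ∑ a, ∑ b, ∑ c, f a b c = ∑ a, ∑ b, ∑ c, f b c a := by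
  rw [sum_rot, sum_rot]

variable {V : Type*} [NormedAddCommGroup V] [InnerProductSpace ℝ V] [FiniteDimensional ℝ V]

local notation "e" => stdOrthonormalBasis ℝ V

/-- Lower a trilinear scalar form to a `V`-valued bilinear map. -/
noncomputable def lower3 (F : V → V → V → ℝ)
    (hy : ∀ x z, IsLinearMap ℝ fun y => F x y z)
    (hz : ∀ x y, IsLinearMap ℝ fun z => F x y z) : V →ₗ[ℝ] V →ₗ[ℝ] V :=
  LinearMap.mk₂ ℝ
    (fun y z => ∑ i, F (e i) y z • e i)
    (fun y₁ y₂ z => by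
      rw [← Finset.sum_add_distrib]
      exact Finset.sum_congr rfl fun i _ => by rw [(hy (e i) z).map_add, add_smul])
    (fun c y z => by
      rw [Finset.smul_sum]
      exact Finset.sum_congr rfl fun i _ => by
        rw [(hy (e i) z).map_smul, smul_smul, smul_eq_mul])
    (fun y z₁ z₂ => by
      rw [← Finset.sum_add_distrib]
      exact Finset.sum_congr rfl fun i _ => by rw [(hz (e i) y).map_add, add_smul])
    (fun c y z => by
      rw [Finset.smul_sum]
      exact Finset.sum_congr rfl fun i _ => by
        rw [(hz (e i) y).map_smul, smul_smul, smul_eq_mul])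

lemma lower3_apply (F : V → V → V → ℝ) (hy) (hz) (y z : V) :
    lower3 F hy hz y z = ∑ i, F (e i) y z • e i := rfl

lemma inner_lower3 (F : V → V → V → ℝ) (hy) (hz)
    (hx : ∀ y z, IsLinearMap ℝ fun x => F x y z) (x y z : V) :
    (inner ℝ x (lower3 F hy hz y z) : ℝ) = F x y z := by
  rw [lower3_apply, inner_sum]
  have h1 : ∀ i, (inner ℝ x (F (e i) y z • e i) : ℝ) = (inner ℝ (e i) x : ℝ) * F (e i) y z := by
    intro i
    rw [real_inner_smul_right, real_inner_comm, mul_comm]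
  rw [Finset.sum_congr rfl fun i _ => h1 i]
  calc ∑ i, (inner ℝ (e i) x : ℝ) * F (e i) y z
      = ∑ i, F ((inner ℝ (e i) x : ℝ) • e i) y z := by
        refine Finset.sum_congr rfl fun i _ => ?_
        rw [(hx y z).map_smul, smul_eq_mul]
    _ = F x y z := by
        have hs : ((IsLinearMap.mk' _ (hx y z)) (∑ i, (inner ℝ (e i) x : ℝ) • e i))
            = ∑ i, (IsLinearMap.mk' _ (hx y z)) ((inner ℝ (e i) x : ℝ) • e i) := map_sum _ _ _
        simp only [IsLinearMap.mk'_apply] at hs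
        rw [← hs, OrthonormalBasis.sum_repr']

lemma sumJ (J : V →ₗ[ℝ] V) (hJ2 : ∀ x, J (J x) = -x)
    (hJg : ∀ x y, (inner ℝ (J x) (J y) : ℝ) = inner ℝ x y)
    (f g : V → ℝ) (hf : IsLinearMap ℝ f) (hg : IsLinearMap ℝ g) :
    ∑ i, f (J (e i)) * g (J (e i)) = ∑ i, f (e i) * g (e i) := by
  have hJswap : ∀ u v : V, (inner ℝ u (J v) : ℝ) = -(inner ℝ (J u) v : ℝ) := by
    intro u v
    rw [← hJg u (J v), hJ2, inner_neg_right]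
  have hrep : ∀ (h : V → ℝ), IsLinearMap ℝ h → ∀ u : V,
      h u = ∑ a, (inner ℝ (e a) u : ℝ) * h (e a) := by
    intro h hh u
    conv_lhs => rw [← OrthonormalBasis.sum_repr' (stdOrthonormalBasis ℝ V) u]
    have := map_sum (IsLinearMap.mk' h hh) (fun a => (inner ℝ (e a) u : ℝ) • e a) Finset.univ
    simp only [IsLinearMap.mk'_apply] at this
    rw [this]
    exact Finset.sum_congr rfl fun a _ => by rw [hh.map_smul, smul_eq_mul]
  have key : ∀ a b : _, ∑ i, (inner ℝ (e a) (J (e i)) : ℝ) * (inner ℝ (e b) (J (e i)) : ℝ)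
      = if a = b then 1 else 0 := by
    intro a b
    have : ∀ i, (inner ℝ (e a) (J (e i)) : ℝ) * (inner ℝ (e b) (J (e i)) : ℝ)
        = (inner ℝ (J (e a)) (e i) : ℝ) * (inner ℝ (e i) (J (e b)) : ℝ) := by
      intro i
      rw [hJswap (e a), hJswap (e b)]
      rw [real_inner_comm (e i) (J (e b))]
      ring
    rw [Finset.sum_congr rfl fun i _ => this i, OrthonormalBasis.sum_inner_mul_inner,
      hJg]
    exact (orthonormal_iff_ite.mp (stdOrthonormalBasis ℝ V).orthonormal) a b
  calc ∑ i, f (J (e i)) * g (J (e i))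
      = ∑ i, (∑ a, (inner ℝ (e a) (J (e i)) : ℝ) * f (e a))
          * (∑ b, (inner ℝ (e b) (J (e i)) : ℝ) * g (e b)) := by
        exact Finset.sum_congr rfl fun i _ => by rw [← hrep f hf, ← hrep g hg]
    _ = ∑ i, ∑ a, ∑ b, ((inner ℝ (e a) (J (e i)) : ℝ) * (inner ℝ (e b) (J (e i)) : ℝ))
          * (f (e a) * g (e b)) := by
        refine Finset.sum_congr rfl fun i _ => ?_
        rw [Finset.sum_mul_sum]
        exact Finset.sum_congr rfl fun a _ => Finset.sum_congr rfl fun b _ => by ring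
    _ = ∑ a, ∑ b, (∑ i, (inner ℝ (e a) (J (e i)) : ℝ) * (inner ℝ (e b) (J (e i)) : ℝ))
          * (f (e a) * g (e b)) := by
        rw [Finset.sum_comm]
        refine Finset.sum_congr rfl fun a _ => ?_
        rw [Finset.sum_comm]
        exact Finset.sum_congr rfl fun b _ => by rw [Finset.sum_mul]
    _ = ∑ a, ∑ b, (if a = b then (1:ℝ) else 0) * (f (e a) * g (e b)) := by
        exact Finset.sum_congr rfl fun a _ => Finset.sum_congr rfl fun b _ => by rw [key]
    _ = ∑ i, f (e i) * g (e i) := by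
        refine Finset.sum_congr rfl fun a _ => ?_
        simp

/-- `∑ ω(e_k,e_i,e_j) ⟪e_k, S e_i e_j⟫ = 0` when `ω` is cyclic and `bS = 0`. -/
lemma termZero (ω : V → V → V → ℝ)
    (hcyc : ∀ x y z, ω x y z = ω y z x)
    (S : V →ₗ[ℝ] V →ₗ[ℝ] V) (hbS : ∀ x y z, bianchiV S x y z = 0) :
    ∑ k, ∑ i, ∑ j, ω (e k) (e i) (e j) * (inner ℝ (e k) (S (e i) (e j)) : ℝ) = 0 := by
  set G : _ → _ → _ → ℝ := fun k i j => ω (e k) (e i) (e j) with hG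
  set T : _ → _ → _ → ℝ := fun k i j => (inner ℝ (e k) (S (e i) (e j)) : ℝ) with hT
  have hcyc' : ∀ k i j, G k i j = G i j k := fun k i j => hcyc _ _ _
  have hsum0 : ∀ k i j, T k i j + T i j k + T j k i = 0 := by
    intro k i j
    have := hbS (e k) (e i) (e j)
    simp only [bianchiV] at this
    simp only [hT]
    linarith
  have h2 : ∑ k, ∑ i, ∑ j, G k i j * T i j k = ∑ k, ∑ i, ∑ j, G k i j * T k i j := by
    have := sum_rot (fun a b c => G a b c * T b c a)
    rw [this]
    exact Finset.sum_congr rfl fun a _ => Finset.sum_congr rfl fun b _ =>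
      Finset.sum_congr rfl fun c _ => by rw [show G c a b = G a b c from by rw [hcyc' c a b]]
  have h3 : ∑ k, ∑ i, ∑ j, G k i j * T j k i = ∑ k, ∑ i, ∑ j, G k i j * T k i j := by
    have := sum_rot' (fun a b c => G a b c * T c a b)
    rw [this]
    exact Finset.sum_congr rfl fun a _ => Finset.sum_congr rfl fun b _ =>
      Finset.sum_congr rfl fun c _ => by
        rw [show G b c a = G a b c from by rw [hcyc' b c a, hcyc' c a b]]
  have htot : ∑ k, ∑ i, ∑ j, (G k i j * T k i j + G k i j * T i j k + G k i j * T j k i) = 0 := by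
    refine Finset.sum_eq_zero fun k _ => Finset.sum_eq_zero fun i _ =>
      Finset.sum_eq_zero fun j _ => ?_
    linear_combination (G k i j) * hsum0 k i j
  have hsplit : ∑ k, ∑ i, ∑ j, (G k i j * T k i j + G k i j * T i j k + G k i j * T j k i)
      = (∑ k, ∑ i, ∑ j, G k i j * T k i j) + (∑ k, ∑ i, ∑ j, G k i j * T i j k)
        + (∑ k, ∑ i, ∑ j, G k i j * T j k i) := by
    rw [← Finset.sum_add_distrib, ← Finset.sum_add_distrib]
    refine Finset.sum_congr rfl fun k _ => ?_
    rw [← Finset.sum_add_distrib, ← Finset.sum_add_distrib]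
    refine Finset.sum_congr rfl fun i _ => ?_
    rw [← Finset.sum_add_distrib, ← Finset.sum_add_distrib]
  rw [hsplit, h2, h3] at htot
  linarith

lemma termJ (J : V →ₗ[ℝ] V) (hJ2 : ∀ x, J (J x) = -x)
    (hJg : ∀ x y, (inner ℝ (J x) (J y) : ℝ) = inner ℝ x y)
    (ω : V → V → V → ℝ)
    (h2 : ∀ x z, IsLinearMap ℝ fun y => ω x y z)
    (h3 : ∀ x y, IsLinearMap ℝ fun z => ω x y z)
    (S : V →ₗ[ℝ] V →ₗ[ℝ] V) (hS2 : ∀ y z, S (J y) (J z) = S y z) :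
    ∑ k, ∑ i, ∑ j, ω (e k) (J (e i)) (J (e j)) * (inner ℝ (e k) (S (e i) (e j)) : ℝ)
      = ∑ k, ∑ i, ∑ j, ω (e k) (e i) (e j) * (inner ℝ (e k) (S (e i) (e j)) : ℝ) := by
  refine Finset.sum_congr rfl fun k _ => ?_
  have glin : ∀ u : V, IsLinearMap ℝ fun v => (inner ℝ (e k) (S u v) : ℝ) := by
    intro u
    constructor <;> intros <;> simp [inner_add_right, inner_smul_right]
  have glin' : ∀ v : V, IsLinearMap ℝ fun u => (inner ℝ (e k) (S u v) : ℝ) := by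
    intro v
    constructor <;> intros <;>
      simp [map_add, LinearMap.add_apply, inner_add_right, map_smul, LinearMap.smul_apply,
        inner_smul_right]
  calc ∑ i, ∑ j, ω (e k) (J (e i)) (J (e j)) * (inner ℝ (e k) (S (e i) (e j)) : ℝ)
      = ∑ i, ∑ j, ω (e k) (J (e i)) (J (e j))
          * (inner ℝ (e k) (S (J (e i)) (J (e j))) : ℝ) := by
        exact Finset.sum_congr rfl fun i _ => Finset.sum_congr rfl fun j _ => by rw [hS2]
    _ = ∑ i, ∑ j, ω (e k) (J (e i)) (e j) * (inner ℝ (e k) (S (J (e i)) (e j)) : ℝ) := by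
        refine Finset.sum_congr rfl fun i _ => ?_
        exact sumJ J hJ2 hJg _ _ (h3 (e k) (J (e i))) (glin (J (e i)))
    _ = ∑ j, ∑ i, ω (e k) (J (e i)) (e j) * (inner ℝ (e k) (S (J (e i)) (e j)) : ℝ) :=
        Finset.sum_comm
    _ = ∑ j, ∑ i, ω (e k) (e i) (e j) * (inner ℝ (e k) (S (e i) (e j)) : ℝ) := by
        refine Finset.sum_congr rfl fun j _ => ?_
        exact sumJ J hJ2 hJg _ _ (h2 (e k) (e j)) (glin' (e j))
    _ = ∑ i, ∑ j, ω (e k) (e i) (e j) * (inner ℝ (e k) (S (e i) (e j)) : ℝ) :=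
        Finset.sum_comm

lemma formInner_lower3 (F : V → V → V → ℝ) (hy) (hz)
    (hx : ∀ y z, IsLinearMap ℝ fun x => F x y z) (S : V →ₗ[ℝ] V →ₗ[ℝ] V) :
    formInner (lower3 F hy hz) S
      = ∑ k, ∑ i, ∑ j, F (e k) (e i) (e j) * (inner ℝ (e k) (S (e i) (e j)) : ℝ) := by
  unfold formInner
  calc ∑ i, ∑ j, (inner ℝ (lower3 F hy hz (e i) (e j)) (S (e i) (e j)) : ℝ)
      = ∑ i, ∑ j, ∑ k, F (e k) (e i) (e j) * (inner ℝ (e k) (S (e i) (e j)) : ℝ) := by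
        refine Finset.sum_congr rfl fun i _ => Finset.sum_congr rfl fun j _ => ?_
        rw [← OrthonormalBasis.sum_inner_mul_inner (stdOrthonormalBasis ℝ V)]
        refine Finset.sum_congr rfl fun k _ => ?_
        rw [real_inner_comm (e k) (lower3 F hy hz (e i) (e j)),
          inner_lower3 F hy hz hx]
    _ = ∑ k, ∑ i, ∑ j, F (e k) (e i) (e j) * (inner ℝ (e k) (S (e i) (e j)) : ℝ) :=
        (sum_rot fun a b c => F (e a) (e b) (e c) * (inner ℝ (e a) (S (e b) (e c)) : ℝ)).symm

/-- Main orthogonality: the lowered form `(3/4)(ω + Mω)` is orthogonal to every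
`Ω^{1,1}` form with vanishing Bianchi sum. -/
lemma orthLower (J : V →ₗ[ℝ] V) (hJ2 : ∀ x, J (J x) = -x)
    (hJg : ∀ x y, (inner ℝ (J x) (J y) : ℝ) = inner ℝ x y)
    (ω : V → V → V → ℝ)
    (h2 : ∀ x z, IsLinearMap ℝ fun y => ω x y z)
    (h3 : ∀ x y, IsLinearMap ℝ fun z => ω x y z)
    (hcyc : ∀ x y z, ω x y z = ω y z x)
    (hy) (hz) (hx : ∀ y z, IsLinearMap ℝ fun x =>
      (3/4 : ℝ) * (ω x y z + ω x (J y) (J z)))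
    (S : V →ₗ[ℝ] V →ₗ[ℝ] V) (hS2 : ∀ y z, S (J y) (J z) = S y z)
    (hbS : ∀ x y z, bianchiV S x y z = 0) :
    formInner (lower3 (fun x y z => (3/4 : ℝ) * (ω x y z + ω x (J y) (J z))) hy hz) S = 0 := by
  rw [formInner_lower3 _ hy hz hx S]
  have split : ∑ k, ∑ i, ∑ j, (3/4 : ℝ) * (ω (e k) (e i) (e j) + ω (e k) (J (e i)) (J (e j)))
        * (inner ℝ (e k) (S (e i) (e j)) : ℝ)
      = (3/4 : ℝ) * ((∑ k, ∑ i, ∑ j, ω (e k) (e i) (e j) * (inner ℝ (e k) (S (e i) (e j)) : ℝ))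
        + (∑ k, ∑ i, ∑ j, ω (e k) (J (e i)) (J (e j)) * (inner ℝ (e k) (S (e i) (e j)) : ℝ))) := by
    rw [mul_add, Finset.mul_sum, Finset.mul_sum, ← Finset.sum_add_distrib]
    refine Finset.sum_congr rfl fun k _ => ?_
    rw [Finset.mul_sum, Finset.mul_sum, ← Finset.sum_add_distrib]
    refine Finset.sum_congr rfl fun i _ => ?_
    rw [Finset.mul_sum, Finset.mul_sum, ← Finset.sum_add_distrib]
    exact Finset.sum_congr rfl fun j _ => by ring
  rw [split, termJ J hJ2 hJg ω h2 h3 S hS2, termZero ω hcyc S hbS]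
  ring

-- pointwise linearity of bianchiV in each slot
lemma bianchi_lin1 (A : V →ₗ[ℝ] V →ₗ[ℝ] V) (y z : V) :
    IsLinearMap ℝ fun x => bianchiV A x y z := by
  constructor <;> intros <;>
    simp only [bianchiV, inner_add_left, inner_smul_left, map_add, map_smul,
      LinearMap.add_apply, LinearMap.smul_apply, inner_add_right, inner_smul_right,
      RCLike.ofReal_real_eq_id, id_eq, conj_trivial, smul_eq_mul] <;> ring

lemma bianchi_lin2 (A : V →ₗ[ℝ] V →ₗ[ℝ] V) (x z : V) :
    IsLinearMap ℝ fun y => bianchiV A x y z := by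
  constructor <;> intros <;>
    simp only [bianchiV, inner_add_left, inner_smul_left, map_add, map_smul,
      LinearMap.add_apply, LinearMap.smul_apply, inner_add_right, inner_smul_right,
      RCLike.ofReal_real_eq_id, id_eq, conj_trivial, smul_eq_mul] <;> ring

lemma bianchi_lin3 (A : V →ₗ[ℝ] V →ₗ[ℝ] V) (x y : V) :
    IsLinearMap ℝ fun z => bianchiV A x y z := by
  constructor <;> intros <;>
    simp only [bianchiV, inner_add_left, inner_smul_left, map_add, map_smul,
      LinearMap.add_apply, LinearMap.smul_apply, inner_add_right, inner_smul_right,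
      RCLike.ofReal_real_eq_id, id_eq, conj_trivial, smul_eq_mul] <;> ring

lemma bianchi_cyc (A : V →ₗ[ℝ] V →ₗ[ℝ] V) (x y z : V) :
    bianchiV A x y z = bianchiV A y z x := by
  simp only [bianchiV]; ring

lemma bianchi_sub (A B : V →ₗ[ℝ] V →ₗ[ℝ] V) (x y z : V) :
    bianchiV (A - B) x y z = bianchiV A x y z - bianchiV B x y z := by
  simp only [bianchiV, LinearMap.sub_apply, inner_sub_right]; ring

lemma skew (A : V →ₗ[ℝ] V →ₗ[ℝ] V) (hA : ∀ y, A y y = 0) (y z : V) :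
    A y z = - A z y := by
  have h := hA (y + z)
  simp only [map_add, LinearMap.add_apply, hA, zero_add, add_zero] at h
  exact eq_neg_of_add_eq_zero_right h

lemma bianchi_alt (A : V →ₗ[ℝ] V →ₗ[ℝ] V) (hA : ∀ y, A y y = 0) (x y : V) :
    bianchiV A x y y = 0 := by
  rw [bianchiV, hA, skew A hA y x]
  simp only [inner_zero_right, inner_neg_right]
  ring

/-- Part (a): for `A ∈ Ω^{1,1}`, the Bianchi 3-form is of type `+`. -/
lemma typePlus (J : V →ₗ[ℝ] V) (hJ2 : ∀ x, J (J x) = -x)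
    (A : V →ₗ[ℝ] V →ₗ[ℝ] V)
    (hA2 : ∀ y z, A (J y) (J z) = A y z) (x y z : V) :
    bianchiV A (J x) (J y) z + bianchiV A (J x) y (J z)
      + bianchiV A x (J y) (J z) = bianchiV A x y z := by
  have key : ∀ a b : V, A (J a) b = - (A a (J b)) := by
    intro a b
    rw [← hA2 (J a) b, hJ2]
    simp
  simp only [bianchiV, hA2, key, inner_neg_right, hJ2, map_neg, LinearMap.neg_apply, neg_neg]
  ring

lemma formInner_sub (A B C : V →ₗ[ℝ] V →ₗ[ℝ] V) :
    formInner (A - B) C = formInner A C - formInner B C := by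
  simp only [formInner, LinearMap.sub_apply, inner_sub_left, Finset.sum_sub_distrib]

lemma formInner_self_zero (S : V →ₗ[ℝ] V →ₗ[ℝ] V) (h : formInner S S = 0) : S = 0 := by
  have hptwise : ∀ i j, S (e i) (e j) = 0 := by
    have h1 : ∀ i ∈ Finset.univ, (0:ℝ) ≤ ∑ j, (inner ℝ (S (e i) (e j)) (S (e i) (e j)) : ℝ) :=
      fun i _ => Finset.sum_nonneg fun j _ => real_inner_self_nonneg
    have h2 := (Finset.sum_eq_zero_iff_of_nonneg h1).mp h
    intro i j
    have h3 : ∀ j ∈ Finset.univ, (0:ℝ) ≤ (inner ℝ (S (e i) (e j)) (S (e i) (e j)) : ℝ) :=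
      fun j _ => real_inner_self_nonneg
    have h4 := (Finset.sum_eq_zero_iff_of_nonneg h3).mp (h2 i (Finset.mem_univ i))
    exact inner_self_eq_zero.mp (h4 j (Finset.mem_univ j))
  refine Module.Basis.ext (stdOrthonormalBasis ℝ V).toBasis fun i => ?_
  refine Module.Basis.ext (stdOrthonormalBasis ℝ V).toBasis fun j => ?_
  simp only [OrthonormalBasis.coe_toBasis, LinearMap.zero_apply]
  exact hptwise i j

end Stmt5Aux


/-- the Bianchi operator restricted to `Ω^{1,1}_a` is an isomorphism onto
the space `Ω⁺` of 3-forms of type '+', with inverse `ω ↦ (3/4)(ω + Mω)`. -/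
theorem stmt5 {V : Type*} [NormedAddCommGroup V] [InnerProductSpace ℝ V]
    [FiniteDimensional ℝ V]
    (J : V →ₗ[ℝ] V) (hJ2 : ∀ x, J (J x) = -x)
    (hJg : ∀ x y, (inner ℝ (J x) (J y) : ℝ) = inner ℝ x y) :
    -- for A ∈ Ω^{1,1}_a : bA ∈ Ω⁺ and A = (3/4)(bA + M(bA))
    (∀ A : V →ₗ[ℝ] V →ₗ[ℝ] V, isOm11a J A →
      ((∀ x y z, bianchiV A (J x) (J y) z + bianchiV A (J x) y (J z)
          + bianchiV A x (J y) (J z) = bianchiV A x y z) ∧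
       (∀ x y z, (inner ℝ x (A y z) : ℝ)
          = (3/4 : ℝ) * (bianchiV A x y z + bianchiV A x (J y) (J z))))) ∧
    -- surjectivity onto Ω⁺
    (∀ ω : V →ₗ[ℝ] V →ₗ[ℝ] V →ₗ[ℝ] ℝ,
      (∀ x y z, ω x y z = - ω y x z) →
      (∀ x y z, ω x y z = - ω x z y) →
      (∀ x y z, ω (J x) (J y) z + ω (J x) y (J z) + ω x (J y) (J z) = ω x y z) →
      ∃ A : V →ₗ[ℝ] V →ₗ[ℝ] V, isOm11a J A ∧
        (∀ x y z, (inner ℝ x (A y z) : ℝ)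
            = (3/4 : ℝ) * (ω x y z + ω x (J y) (J z))) ∧
        (∀ x y z, bianchiV A x y z = ω x y z)) := by
  constructor
  · -- Part 1
    rintro A ⟨⟨hA0, hA2⟩, horth⟩
    have hTP := Stmt5Aux.typePlus J hJ2 A hA2
    refine ⟨hTP, ?_⟩
    -- linearity of the candidate trilinear form F x y z = (3/4)(bA xyz + bA x Jy Jz)
    have hFx : ∀ y z, IsLinearMap ℝ fun x =>
        (3/4 : ℝ) * (bianchiV A x y z + bianchiV A x (J y) (J z)) := by
      intro y z
      constructor
      · intro a b
        rw [(Stmt5Aux.bianchi_lin1 A y z).map_add,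
          (Stmt5Aux.bianchi_lin1 A (J y) (J z)).map_add]; ring
      · intro c a
        rw [(Stmt5Aux.bianchi_lin1 A y z).map_smul,
          (Stmt5Aux.bianchi_lin1 A (J y) (J z)).map_smul]
        simp only [smul_eq_mul]; ring
    have hFy : ∀ x z, IsLinearMap ℝ fun y =>
        (3/4 : ℝ) * (bianchiV A x y z + bianchiV A x (J y) (J z)) := by
      intro x z
      constructor
      · intro a b
        rw [map_add, (Stmt5Aux.bianchi_lin2 A x z).map_add,
          (Stmt5Aux.bianchi_lin2 A x (J z)).map_add]; ring
      · intro c a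
        rw [map_smul, (Stmt5Aux.bianchi_lin2 A x z).map_smul,
          (Stmt5Aux.bianchi_lin2 A x (J z)).map_smul]
        simp only [smul_eq_mul]; ring
    have hFz : ∀ x y, IsLinearMap ℝ fun z =>
        (3/4 : ℝ) * (bianchiV A x y z + bianchiV A x (J y) (J z)) := by
      intro x y
      constructor
      · intro a b
        rw [map_add, (Stmt5Aux.bianchi_lin3 A x y).map_add,
          (Stmt5Aux.bianchi_lin3 A x (J y)).map_add]; ring
      · intro c a
        rw [map_smul, (Stmt5Aux.bianchi_lin3 A x y).map_smul,
          (Stmt5Aux.bianchi_lin3 A x (J y)).map_smul]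
        simp only [smul_eq_mul]; ring
    set A' := Stmt5Aux.lower3
      (fun x y z => (3/4 : ℝ) * (bianchiV A x y z + bianchiV A x (J y) (J z))) hFy hFz with hA'
    have hinA' : ∀ a b c, (inner ℝ a (A' b c) : ℝ)
        = (3/4 : ℝ) * (bianchiV A a b c + bianchiV A a (J b) (J c)) := by
      intro a b c
      exact Stmt5Aux.inner_lower3 _ hFy hFz hFx a b c
    have hnegneg : ∀ v y z, bianchiV A v (J (J y)) (J (J z)) = bianchiV A v y z := by
      intro v y z
      rw [hJ2, hJ2, (Stmt5Aux.bianchi_lin2 A v (-z)).map_neg,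
        (Stmt5Aux.bianchi_lin3 A v y).map_neg, neg_neg]
    have hA'0 : ∀ y, A' y y = 0 := by
      intro y
      refine ext_inner_left ℝ fun v => ?_
      rw [hinA', Stmt5Aux.bianchi_alt A hA0, Stmt5Aux.bianchi_alt A hA0, inner_zero_right]
      ring
    have hA'2 : ∀ y z, A' (J y) (J z) = A' y z := by
      intro y z
      refine ext_inner_left ℝ fun v => ?_
      rw [hinA', hinA', hnegneg]
      ring
    have hbA' : ∀ x y z, bianchiV A' x y z = bianchiV A x y z := by
      intro x y z
      have hc1 : bianchiV A y z x = bianchiV A x y z := (Stmt5Aux.bianchi_cyc A x y z).symm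
      have hc2 : bianchiV A z x y = bianchiV A x y z := Stmt5Aux.bianchi_cyc A z x y
      have hm2 : bianchiV A y (J z) (J x) = bianchiV A (J x) y (J z) :=
        (Stmt5Aux.bianchi_cyc A (J x) y (J z)).symm
      have hm3 : bianchiV A z (J x) (J y) = bianchiV A (J x) (J y) z :=
        Stmt5Aux.bianchi_cyc A z (J x) (J y)
      have ht := hTP x y z
      rw [bianchiV, hinA', hinA', hinA']
      linarith
    set S := A - A' with hS
    have hS0 : ∀ y, S y y = 0 := by
      intro y
      simp [hS, LinearMap.sub_apply, hA0, hA'0]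
    have hS2 : ∀ y z, S (J y) (J z) = S y z := by
      intro y z
      simp only [hS, LinearMap.sub_apply, hA2, hA'2]
    have hbS : ∀ x y z, bianchiV S x y z = 0 := by
      intro x y z
      rw [hS, Stmt5Aux.bianchi_sub, hbA', sub_self]
    have hAS : formInner A S = 0 := horth S ⟨hS0, hS2⟩ hbS
    have hA'S : formInner A' S = 0 := by
      refine Stmt5Aux.orthLower J hJ2 hJg (fun x y z => bianchiV A x y z)
        (fun x z => Stmt5Aux.bianchi_lin2 A x z) (fun x y => Stmt5Aux.bianchi_lin3 A x y)
        (fun x y z => Stmt5Aux.bianchi_cyc A x y z) hFy hFz hFx S hS2 hbS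
    have hSS : formInner S S = 0 := by
      have := Stmt5Aux.formInner_sub A A' S
      rw [← hS] at this
      rw [this, hAS, hA'S, sub_self]
    have hSzero : S = 0 := Stmt5Aux.formInner_self_zero S hSS
    have hAA' : A = A' := by
      have : A - A' = 0 := by rw [← hS]; exact hSzero
      exact sub_eq_zero.mp this
    intro x y z
    conv_lhs => rw [hAA']
    exact hinA' x y z
  · -- Part 2
    intro ω hanti1 hanti2 htype
    have hcyc : ∀ x y z, ω x y z = ω y z x := by
      intro x y z
      rw [hanti1 x y z, hanti2 y x z, neg_neg]
    have hzero : ∀ x y, ω x y y = 0 := by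
      intro x y
      have := hanti2 x y y
      linarith
    have h2' : ∀ (x z : V), IsLinearMap ℝ fun y => (ω x y z : ℝ) := by
      intro x z
      constructor <;> intros <;>
        simp [map_add, LinearMap.add_apply, map_smul, LinearMap.smul_apply, smul_eq_mul]
    have h3' : ∀ (x y : V), IsLinearMap ℝ fun z => (ω x y z : ℝ) := by
      intro x y
      constructor <;> intros <;>
        simp [map_add, LinearMap.add_apply, map_smul, LinearMap.smul_apply, smul_eq_mul]
    have hFx : ∀ y z, IsLinearMap ℝ fun x =>
        (3/4 : ℝ) * (ω x y z + ω x (J y) (J z)) := by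
      intro y z
      constructor <;> intros <;>
        simp only [map_add, LinearMap.add_apply, map_smul, LinearMap.smul_apply,
          smul_eq_mul] <;> ring
    have hFy : ∀ x z, IsLinearMap ℝ fun y =>
        (3/4 : ℝ) * (ω x y z + ω x (J y) (J z)) := by
      intro x z
      constructor <;> intros <;>
        simp only [map_add, LinearMap.add_apply, map_smul, LinearMap.smul_apply,
          smul_eq_mul] <;> ring
    have hFz : ∀ x y, IsLinearMap ℝ fun z =>
        (3/4 : ℝ) * (ω x y z + ω x (J y) (J z)) := by
      intro x y
      constructor <;> intros <;>
        simp only [map_add, LinearMap.add_apply, map_smul, LinearMap.smul_apply,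
          smul_eq_mul] <;> ring
    set A := Stmt5Aux.lower3
      (fun x y z => (3/4 : ℝ) * (ω x y z + ω x (J y) (J z))) hFy hFz with hA
    have hinA : ∀ a b c, (inner ℝ a (A b c) : ℝ)
        = (3/4 : ℝ) * (ω a b c + ω a (J b) (J c)) := by
      intro a b c
      exact Stmt5Aux.inner_lower3 _ hFy hFz hFx a b c
    have hA0 : ∀ y, A y y = 0 := by
      intro y
      refine ext_inner_left ℝ fun v => ?_
      rw [hinA, hzero, hzero, inner_zero_right]
      ring
    have hA2 : ∀ y z, A (J y) (J z) = A y z := by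
      intro y z
      refine ext_inner_left ℝ fun v => ?_
      rw [hinA, hinA, hJ2, hJ2]
      simp only [map_neg, LinearMap.neg_apply, neg_neg]
      ring
    have hb : ∀ x y z, bianchiV A x y z = ω x y z := by
      intro x y z
      have hc1 : (ω y z x : ℝ) = ω x y z := (hcyc x y z).symm
      have hc2 : (ω z x y : ℝ) = ω x y z := hcyc z x y
      have hm2 : (ω y (J z) (J x) : ℝ) = ω (J x) y (J z) := (hcyc (J x) y (J z)).symm
      have hm3 : (ω z (J x) (J y) : ℝ) = ω (J x) (J y) z := hcyc z (J x) (J y)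
      have ht := htype x y z
      rw [bianchiV, hinA, hinA, hinA]
      linarith
    have horth : ∀ S : V →ₗ[ℝ] V →ₗ[ℝ] V,
        isOm11 J S → (∀ x y z, bianchiV S x y z = 0) → formInner A S = 0 := by
      intro S hSom hbS
      exact Stmt5Aux.orthLower J hJ2 hJg (fun x y z => (ω x y z : ℝ))
        h2' h3' (fun x y z => hcyc x y z) hFy hFz hFx S hSom.2 hbS
    exact ⟨A, ⟨⟨hA0, hA2⟩, horth⟩, hinA, hb⟩
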